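/- Let n ≥ 1, let S be a nonempty subset of 𝔽_2^{2n} \ {0}, and let W_{a,b} = (−1)^{⟨a,b⟩} for a ∈ S, b ∈ 𝔽_2^{2n}. Then for every M ∈ ℝ^S there exists λ : 𝔽_2^{2n} → ℝ with λ_b ≥ 0 for all b, Σ_b W_{a,b} λ_b = M_a for all a ∈ S, and Σ_b λ_b ≤ Σ_{a ∈ S} |M_a|. -/

import Mathlib

/-- Binary symplectic vectors: `𝔽_2^{2n}` presented as pairs `(a_x, a_z)` of
vectors in `𝔽_2^n`. -/
abbrev BV (n : ℕ) := (Fin n → ZMod 2) × (Fin n → ZMod 2)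

/-- The binary symplectic form `⟨a,b⟩ = a_x · b_z + a_z · b_x` (mod 2). -/
def symp {n : ℕ} (a b : BV n) : ZMod 2 :=
  (∑ i, a.1 i * b.2 i) + (∑ i, a.2 i * b.1 i)

/-- The real sign `(−1)^{⟨a,b⟩} ∈ {−1, 1} ⊆ ℝ`. -/
noncomputable def wsgn {n : ℕ} (a b : BV n) : ℝ := (-1 : ℝ) ^ (symp a b).val

lemma zmod2_eq_one {x : ZMod 2} (h : x ≠ 0) : x = 1 := by
  revert h x; decide

lemma neg_one_pow_add (x y : ZMod 2) :
    ((-1:ℝ)) ^ ((x+y).val) = (-1:ℝ)^x.val * (-1:ℝ)^y.val := by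
  have hv : ∀ a b : ZMod 2, (a+b).val = (a.val + b.val) % 2 := by decide
  rw [hv, ← pow_add]
  conv_rhs => rw [← Nat.div_add_mod (x.val + y.val) 2, pow_add, pow_mul]
  norm_num

lemma symp_add_left {n : ℕ} (a a' b : BV n) :
    symp (a + a') b = symp a b + symp a' b := by
  simp only [symp, Prod.fst_add, Prod.snd_add, Pi.add_apply, add_mul,
    Finset.sum_add_distrib]
  ring

lemma symp_add_right {n : ℕ} (a b b' : BV n) :
    symp a (b + b') = symp a b + symp a b' := by
  simp only [symp, Prod.fst_add, Prod.snd_add, Pi.add_apply, mul_add,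
    Finset.sum_add_distrib]
  ring

lemma wsgn_add_left {n : ℕ} (a a' b : BV n) :
    wsgn (a + a') b = wsgn a b * wsgn a' b := by
  rw [wsgn, symp_add_left, neg_one_pow_add]; rfl

lemma wsgn_add_right {n : ℕ} (a b b' : BV n) :
    wsgn a (b + b') = wsgn a b * wsgn a b' := by
  rw [wsgn, symp_add_right, neg_one_pow_add]; rfl

lemma abs_wsgn {n : ℕ} (a b : BV n) : |wsgn a b| = 1 := by
  rw [wsgn, abs_pow, abs_neg, abs_one, one_pow]

lemma exists_symp_one {n : ℕ} {c : BV n} (hc : c ≠ 0) :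
    ∃ b0 : BV n, symp c b0 = 1 := by
  have : c.1 ≠ 0 ∨ c.2 ≠ 0 := by
    by_contra h
    push_neg at h
    exact hc (Prod.ext h.1 h.2)
  rcases this with h | h
  · obtain ⟨i, hi⟩ := Function.ne_iff.mp h
    rw [Pi.zero_apply] at hi
    refine ⟨(0, Pi.single i 1), ?_⟩
    simp only [symp, Pi.zero_apply, mul_zero, Finset.sum_const_zero, add_zero]
    rw [Fintype.sum_eq_single i (fun j hj => by simp [Pi.single_eq_of_ne hj])]
    rw [Pi.single_eq_same, mul_one]
    exact zmod2_eq_one hi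
  · obtain ⟨i, hi⟩ := Function.ne_iff.mp h
    rw [Pi.zero_apply] at hi
    refine ⟨(Pi.single i 1, 0), ?_⟩
    simp only [symp, Pi.zero_apply, mul_zero, Finset.sum_const_zero, zero_add]
    rw [Fintype.sum_eq_single i (fun j hj => by simp [Pi.single_eq_of_ne hj])]
    rw [Pi.single_eq_same, mul_one]
    exact zmod2_eq_one hi

lemma sum_wsgn_eq_zero {n : ℕ} {c : BV n} (hc : c ≠ 0) :
    ∑ b : BV n, wsgn c b = 0 := by
  obtain ⟨b0, hb0⟩ := exists_symp_one hc
  have key : ∑ b : BV n, wsgn c b = ∑ b : BV n, wsgn c (b + b0) :=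
    (Fintype.sum_equiv (Equiv.addRight b0) _ _ (fun b => rfl)).symm
  have h2 : ∀ b : BV n, wsgn c (b + b0) = - wsgn c b := by
    intro b
    rw [wsgn_add_right]
    have : wsgn c b0 = -1 := by
      rw [wsgn, hb0, ZMod.val_one, pow_one]
    rw [this]; ring
  simp only [h2, Finset.sum_neg_distrib] at key
  linarith

lemma sum_wsgn_self {n : ℕ} :
    ∑ b : BV n, wsgn (0 : BV n) b = (Fintype.card (BV n) : ℝ) := by
  have h : ∀ b : BV n, wsgn (0 : BV n) b = 1 := by
    intro b
    have : symp (0 : BV n) b = 0 := by simp [symp]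
    rw [wsgn, this]; norm_num
  simp [h]

lemma add_self_bv {n : ℕ} (a : BV n) : a + a = 0 := by
  have h2 : ∀ x : ZMod 2, x + x = 0 := by decide
  refine Prod.ext ?_ ?_ <;> funext i <;> exact h2 _

lemma orth {n : ℕ} (a a' : BV n) :
    ∑ b : BV n, wsgn a b * wsgn a' b =
      if a' = a then (Fintype.card (BV n) : ℝ) else 0 := by
  have h : ∑ b : BV n, wsgn a b * wsgn a' b = ∑ b : BV n, wsgn (a + a') b := by
    simp [wsgn_add_left]
  rw [h]
  by_cases hh : a' = a
  · subst hh; rw [add_self_bv, sum_wsgn_self]; simp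
  · have hz : a + a' ≠ 0 := by
      intro hz
      apply hh
      calc a' = 0 + a' := (zero_add a').symm
        _ = (a + a') + a' := by rw [hz]
        _ = a + (a' + a') := by rw [add_assoc]
        _ = a := by rw [add_self_bv, add_zero]
    rw [sum_wsgn_eq_zero hz]
    simp [hh]

/-- there is a feasible `λ` with total weight at most the ℓ1-norm of `M`. -/
theorem stmt_3 (n : ℕ) (hn : 1 ≤ n) (S : Finset (BV n)) (hS : S.Nonempty)
    (h0 : (0 : BV n) ∉ S) (M : BV n → ℝ) :
    ∃ lam : BV n → ℝ, (∀ b, 0 ≤ lam b) ∧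
      (∀ a ∈ S, ∑ b : BV n, wsgn a b * lam b = M a) ∧
      ∑ b : BV n, lam b ≤ ∑ a ∈ S, |M a| := by
  have hKpos : (0:ℝ) < (Fintype.card (BV n) : ℝ) := by
    exact_mod_cast (Fintype.card_pos : 0 < Fintype.card (BV n))
  set K : ℝ := (Fintype.card (BV n) : ℝ) with hK
  set c : ℝ := ∑ a ∈ S, |M a| with hc
  set T : BV n → ℝ := fun b => ∑ a ∈ S, M a * wsgn a b with hT
  refine ⟨fun b => K⁻¹ * (c + T b), ?_, ?_, ?_⟩
  · intro b
    have habs : |T b| ≤ c := by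
      calc |T b| ≤ ∑ a ∈ S, |M a * wsgn a b| := Finset.abs_sum_le_sum_abs _ _
        _ = c := Finset.sum_congr rfl fun a _ => by rw [abs_mul, abs_wsgn, mul_one]
    have hnn : 0 ≤ c + T b := by
      have := neg_abs_le (T b)
      linarith
    positivity
  · intro a ha
    have haz : a ≠ 0 := fun h => h0 (h ▸ ha)
    have e : ∀ b : BV n, wsgn a b * (K⁻¹ * (c + T b)) =
        K⁻¹ * c * wsgn a b + K⁻¹ * (wsgn a b * T b) := fun b => by ring
    rw [Finset.sum_congr rfl (fun b _ => e b), Finset.sum_add_distrib,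
      ← Finset.mul_sum, ← Finset.mul_sum, sum_wsgn_eq_zero haz, mul_zero, zero_add]
    have e2 : ∀ b : BV n, wsgn a b * T b
        = ∑ a' ∈ S, M a' * (wsgn a b * wsgn a' b) := by
      intro b
      rw [hT, Finset.mul_sum]
      exact Finset.sum_congr rfl fun a' _ => by ring
    rw [Finset.sum_congr rfl (fun b _ => e2 b), Finset.sum_comm]
    have e3 : ∀ a' ∈ S, ∑ b : BV n, M a' * (wsgn a b * wsgn a' b)
        = M a' * (if a' = a then K else 0) := fun a' _ => by
      rw [← Finset.mul_sum, orth]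
    rw [Finset.sum_congr rfl e3, Finset.sum_eq_single a
      (fun a' _ hne => by simp [hne]) (fun h => absurd ha h)]
    simp only [if_pos rfl, if_true]
    field_simp
  · have e : ∀ b : BV n, K⁻¹ * (c + T b) = K⁻¹ * c + K⁻¹ * T b := fun b => by ring
    rw [Finset.sum_congr rfl (fun b _ => e b), Finset.sum_add_distrib,
      ← Finset.mul_sum, Finset.sum_const, nsmul_eq_mul]
    have hTsum : ∑ b : BV n, T b = 0 := by
      rw [hT]
      rw [Finset.sum_comm]
      rw [Finset.sum_congr rfl (fun a haa => by
        rw [← Finset.mul_sum, sum_wsgn_eq_zero (fun h : a = 0 => h0 (h ▸ haa)),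
          mul_zero])]
      simp
    rw [← Finset.mul_sum, hTsum, mul_zero, add_zero, Finset.card_univ, ← hK,
      show K⁻¹ * (K * c) = (K⁻¹ * K) * c from by ring,
      inv_mul_cancel₀ (ne_of_gt hKpos), one_mul]
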